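/- arXiv:1609.04910 — 4 statements merged into one kernel-verified Lean document; each statement's English description precedes it below -/
import Mathlib

section
/- Let Ψ be the set of functions u : ℕ → ℝ_{>0} with Σ_{n≥1} 1/u(n) < ∞. Let a, b > 1 be real numbers and ψ ∈ Ψ. Then there exists ω ∈ Ψ such that ω(⌊log_b n⌋) ≤ ψ(⌊log_a n⌋) for all n ≥ 2. -/
/-!
With `r = log_a b`, we have `log_a n = r · log_b n`, so `⌊log_a n⌋` lies in the interval
`I_k = [⌊k r⌋, ⌊(k + 1) r⌋]` where `k = ⌊log_b n⌋`. Take `ω k = min_{m ∈ I_k} ψ m = ψ (g k)`.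
A given `m` lies in `I_k` only for `k` in a real interval of length `1 + 1/r`, so `g` has
uniformly bounded fibres and `∑ 1 / ψ (g k)` is dominated by a multiple of `∑ 1 / ψ m`.
-/

open Real Finset

theorem summable_comp_of_encard_preimage_le {α β : Type*} {f : β → ℝ} (hf0 : 0 ≤ f)
    (hf : Summable f) {g : α → β} {B : ℕ} (hg : ∀ b, (g ⁻¹' {b}).encard ≤ B) :
    Summable (f ∘ g) := by
  classical
  refine summable_of_sum_le (c := B * ∑' b, f b) (fun x => hf0 (g x)) fun u => ?_
  have hfiber : ∀ b, #{x ∈ u | g x = b} ≤ B := fun b => by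
    have : ((u.filter (g · = b) : Finset α) : Set α) ⊆ g ⁻¹' {b} := fun x hx => by
      simpa using (mem_filter.1 hx).2
    exact_mod_cast (Set.encard_coe_eq_coe_finsetCard _).symm.le.trans
      ((Set.encard_le_encard this).trans (hg b))
  calc ∑ x ∈ u, f (g x) = ∑ b ∈ u.image g, #{x ∈ u | g x = b} • f b := sum_comp f g
    _ ≤ ∑ b ∈ u.image g, B * f b := sum_le_sum fun b _ => by
        rw [nsmul_eq_mul]; exact mul_le_mul_of_nonneg_right (by exact_mod_cast hfiber b) (hf0 b)
    _ = B * ∑ b ∈ u.image g, f b := (mul_sum _ _ _).symm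
    _ ≤ B * ∑' b, f b := by gcongr; exact hf.sum_le_tsum _ fun b _ => hf0 b

theorem encard_setOf_natCast_mem_Ico_le (x L : ℝ) :
    {k : ℕ | (k : ℝ) ∈ Set.Ico x (x + L)}.encard ≤ ⌈L⌉₊ := by
  have hsub : {k : ℕ | (k : ℝ) ∈ Set.Ico x (x + L)} ⊆ Ico ⌈x⌉₊ (⌈x⌉₊ + ⌈L⌉₊) := by
    rintro k ⟨hxk, hkL⟩
    simp only [coe_Ico, Set.mem_Ico, Nat.ceil_le]
    refine ⟨hxk, ?_⟩
    have hgap : ((k - ⌈x⌉₊ : ℕ) : ℝ) < L := by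
      rw [Nat.cast_sub (Nat.ceil_le.2 hxk)]; linarith [Nat.le_ceil x]
    have := Nat.lt_ceil.2 hgap
    omega
  calc _ ≤ ((Ico ⌈x⌉₊ (⌈x⌉₊ + ⌈L⌉₊) : Finset ℕ) : Set ℕ).encard := Set.encard_le_encard hsub
    _ = ⌈L⌉₊ := by rw [Set.encard_coe_eq_coe_finsetCard, Nat.card_Ico]; simp

theorem floor_mul_le_floor_succ_mul {r : ℝ} (hr : 0 ≤ r) (k : ℕ) :
    ⌊k * r⌋₊ ≤ ⌊(k + 1) * r⌋₊ :=
  Nat.floor_le_floor (by gcongr; linarith)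

theorem floor_mul_mem_Icc {r t : ℝ} (hr : 0 ≤ r) (ht : 0 ≤ t) :
    ⌊t * r⌋₊ ∈ Icc ⌊⌊t⌋₊ * r⌋₊ ⌊(⌊t⌋₊ + 1) * r⌋₊ :=
  mem_Icc.2 ⟨Nat.floor_le_floor (by gcongr; exact Nat.floor_le ht),
    Nat.floor_le_floor (by gcongr; exact (Nat.lt_floor_add_one t).le)⟩

theorem encard_setOf_mem_Icc_floor_mul_le {r : ℝ} (hr : 0 < r) (m : ℕ) :
    {k : ℕ | m ∈ Icc ⌊k * r⌋₊ ⌊(k + 1) * r⌋₊}.encard ≤ ⌈1 + r⁻¹⌉₊ := by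
  refine (Set.encard_le_encard fun k (hk : m ∈ Icc _ _) => ?_).trans
    (encard_setOf_natCast_mem_Ico_le (m * r⁻¹ - 1) (1 + r⁻¹))
  obtain ⟨hlo, hhi⟩ := mem_Icc.1 hk
  have h1 : (k : ℝ) * r < m + 1 := by
    exact_mod_cast (Nat.floor_lt (by positivity)).1 (Nat.lt_succ_of_le hlo)
  have h2 : (m : ℝ) ≤ (k + 1) * r := (Nat.le_floor_iff (by positivity)).1 hhi
  constructor
  · rw [sub_le_iff_le_add, ← div_eq_mul_inv, div_le_iff₀ hr]; linarith
  · rw [show m * r⁻¹ - 1 + (1 + r⁻¹) = (m + 1) / r by field_simp; ring, lt_div_iff₀ hr]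
    exact h1

/-- For `a, b > 1` and `ψ` with summable reciprocals there exists `ω` with summable
reciprocals such that `ω ⌊log_b n⌋ ≤ ψ ⌊log_a n⌋` for all `n ≥ 2`. -/
theorem stmt_1 (a b : ℝ) (ha : 1 < a) (hb : 1 < b)
    (ψ : ℕ → ℝ) (hψpos : ∀ n, 0 < ψ n) (hψ : Summable fun n => 1 / ψ n) :
    ∃ ω : ℕ → ℝ, (∀ n, 0 < ω n) ∧ (Summable fun n => 1 / ω n) ∧
      ∀ n : ℕ, 2 ≤ n → ω ⌊Real.logb b n⌋₊ ≤ ψ ⌊Real.logb a n⌋₊ := by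
  set r := logb a b
  have hr : 0 < r := logb_pos ha hb
  choose g hg_mem hg_min using fun k : ℕ =>
    (Icc ⌊k * r⌋₊ ⌊(k + 1) * r⌋₊).exists_min_image ψ
      (nonempty_Icc.2 (floor_mul_le_floor_succ_mul hr.le k))
  refine ⟨ψ ∘ g, fun k => hψpos (g k), ?_, fun n hn => hg_min _ _ ?_⟩
  · have hfiber (m : ℕ) : g ⁻¹' {m} ⊆ {k : ℕ | m ∈ Icc ⌊k * r⌋₊ ⌊(k + 1) * r⌋₊} :=
      fun k hk => (Set.mem_singleton_iff.1 hk) ▸ hg_mem k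
    exact summable_comp_of_encard_preimage_le (fun m => (one_div_pos.2 (hψpos m)).le) hψ
      fun m => (Set.encard_le_encard (hfiber m)).trans (encard_setOf_mem_Icc_floor_mul_le hr m)
  · rw [← mul_logb (a := a) (c := n) (by linarith) hb.ne' (by linarith), mul_comm (logb a b)]
    exact floor_mul_mem_Icc hr.le (logb_nonneg hb (by exact_mod_cast (by omega : 1 ≤ n)))
end

section
/- Let X_1 be a non-negative random variable whose distribution function F satisfies F(x) = 1 - 1/log(x) for all sufficiently large x. Then for every n ∈ ℕ and every choice of b_n < n, the trimmed sum S_n^{b_n} (the sum of the n - b_n smallest among X_1,...,X_n i.i.d.) has infinite expectation: E(S_n^{b_n}) = ∞. -/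
/-!
The trimmed sum of non-negative numbers dominates their minimum, since at least one summand
survives the trimming. By independence, `P(min_{i<n} X_i > x) = P(X_0 > x)^n = (log x)^{-n}` for
large `x`, so Markov's inequality gives `E S_n^{b_n} ≥ x / (log x)^n`, which tends to infinity.
-/

open MeasureTheory ProbabilityTheory Real

/-- The trimmed sum: sum of all but the `b` largest of `x 0, …, x (n-1)`. -/
noncomputable def trimmedSum (n b : ℕ) (x : ℕ → ℝ) : ℝ :=
  (((List.ofFn fun i : Fin n => x i).insertionSort (· ≥ ·)).drop b).sum

open Filter

theorem le_trimmedSum {n b : ℕ} (hb : b < n) {x : ℕ → ℝ} {t : ℝ}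
    (hx : ∀ i < n, 0 ≤ x i) (ht : ∀ i < n, t ≤ x i) : t ≤ trimmedSum n b x := by
  set l := ((List.ofFn fun i : Fin n => x i).insertionSort (· ≥ ·)).drop b
  have hmem : ∀ a ∈ l, ∃ i < n, x i = a := by
    intro a ha
    have := (List.perm_insertionSort (· ≥ ·) _).mem_iff.mp (List.mem_of_mem_drop ha)
    obtain ⟨i, hi⟩ := List.mem_ofFn.mp this
    exact ⟨i, i.2, hi⟩
  obtain ⟨a, ha⟩ : ∃ a, a ∈ l := List.exists_mem_of_ne_nil l <| by
    simp [l, List.length_insertionSort, hb]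
  obtain ⟨i, hi, rfl⟩ := hmem a ha
  calc t ≤ x i := ht i hi
    _ ≤ l.sum := List.single_le_sum (fun a ha => by
        obtain ⟨j, hj, rfl⟩ := hmem a ha; exact hx j hj) _ ha

theorem tendsto_div_log_pow_atTop (n : ℕ) : Tendsto (fun x : ℝ => x / log x ^ n) atTop atTop := by
  have hpos : ∀ᶠ x : ℝ in atTop, 0 < log x ^ n / id x := by
    filter_upwards [eventually_gt_atTop 1] with x hx
    exact div_pos (pow_pos (log_pos hx) n) (by simp; linarith)
  have := (tendsto_nhdsWithin_iff.2
    ⟨isLittleO_pow_log_id_atTop.tendsto_div_nhds_zero, hpos⟩).inv_tendsto_nhdsGT_zero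
  convert this using 2 with x
  simp

theorem mul_measure_le_lintegral_of_forall_le {Ω : Type*} [MeasurableSpace Ω] {μ : Measure Ω}
    {s : Set Ω} (hs : NullMeasurableSet s μ) {f : Ω → ENNReal} {c : ENNReal}
    (h : ∀ ω ∈ s, c ≤ f ω) : c * μ s ≤ ∫⁻ ω, f ω ∂μ := by
  rw [← lintegral_indicator_const₀ hs]
  exact lintegral_mono (Set.indicator_le h)

theorem measure_preimage_Ioi_eq_ofReal_one_sub {Ω : Type*} [MeasurableSpace Ω] {μ : Measure Ω}
    [IsProbabilityMeasure μ] {Y : Ω → ℝ} (hY : AEMeasurable Y μ) (t : ℝ) :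
    μ (Y ⁻¹' Set.Ioi t) = ENNReal.ofReal (1 - (μ {ω | Y ω ≤ t}).toReal) := by
  have hcompl : Y ⁻¹' Set.Ioi t = {ω | Y ω ≤ t}ᶜ := by ext; simp
  have hIic : NullMeasurableSet {ω | Y ω ≤ t} μ := hY.nullMeasurableSet_preimage measurableSet_Iic
  rw [hcompl, prob_compl_eq_one_sub₀ hIic,
    ENNReal.ofReal_sub _ ENNReal.toReal_nonneg, ENNReal.ofReal_one,
    ENNReal.ofReal_toReal (measure_ne_top μ _)]

theorem ProbabilityTheory.iIndepFun.measure_biInter_preimage_eq_pow {Ω ι β : Type*}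
    [MeasurableSpace Ω] {μ : Measure Ω} [MeasurableSpace β] {X : ι → Ω → β}
    (hindep : iIndepFun X μ) {j : ι} (hident : ∀ i, IdentDistrib (X i) (X j) μ μ)
    (S : Finset ι) {s : Set β} (hs : MeasurableSet s) : μ (⋂ i ∈ S, X i ⁻¹' s) = μ (X j ⁻¹' s) ^ S.card := by
  rw [hindep.meas_biInter fun i _ => ⟨s, hs, rfl⟩,
    Finset.prod_congr rfl fun i _ => (hident i).measure_mem_eq hs, Finset.prod_const]

theorem stmt_8_general
    {Ω : Type*} [MeasurableSpace Ω] (μ : Measure Ω) [IsProbabilityMeasure μ]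
    (X : ℕ → Ω → ℝ)
    (hindep : iIndepFun X μ)
    (hident : ∀ i, IdentDistrib (X i) (X 0) μ μ)
    (hnonneg : ∀ i ω, 0 ≤ X i ω)
    (x₀ : ℝ)
    (hF : ∀ x : ℝ, x₀ ≤ x → (μ {ω | X 0 ω ≤ x}).toReal = 1 - 1 / Real.log x) :
    ∀ n b : ℕ, b < n →
      ∫⁻ ω, ENNReal.ofReal (trimmedSum n b fun k => X k ω) ∂μ = ⊤ := by
  intro n b hb
  set A : ℝ → Set Ω := fun t => ⋂ i ∈ Finset.range n, X i ⁻¹' Set.Ioi t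
  have hA : ∀ t, μ (A t) = ENNReal.ofReal (1 - (μ {ω | X 0 ω ≤ t}).toReal) ^ n := fun t => by
    rw [hindep.measure_biInter_preimage_eq_pow hident _ measurableSet_Ioi, Finset.card_range,
      measure_preimage_Ioi_eq_ofReal_one_sub (hident 0).aemeasurable_fst]
  have hA_null : ∀ t, NullMeasurableSet (A t) μ := fun t =>
    .biInter (Finset.range n).countable_toSet fun i _ =>
      (hident i).aemeasurable_fst.nullMeasurableSet_preimage measurableSet_Ioi
  have markov : ∀ t, max x₀ 1 ≤ t → ENNReal.ofReal (t / log t ^ n) ≤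
      ∫⁻ ω, ENNReal.ofReal (trimmedSum n b fun k => X k ω) ∂μ := fun t ht => by
    have ht₁ : 1 ≤ t := le_of_max_le_right ht
    have hlog : 0 ≤ log t := log_nonneg ht₁
    calc ENNReal.ofReal (t / log t ^ n) = ENNReal.ofReal t * μ (A t) := by
          rw [hA, hF t (le_of_max_le_left ht), sub_sub_cancel,
            ← ENNReal.ofReal_pow (by positivity), ← ENNReal.ofReal_mul (by linarith),
            one_div, inv_pow, div_eq_mul_inv]
      _ ≤ _ := mul_measure_le_lintegral_of_forall_le (hA_null t) fun ω hω =>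
          ENNReal.ofReal_le_ofReal <| le_trimmedSum hb (fun i _ => hnonneg i ω) fun i hi =>
            (Set.mem_iInter₂.mp hω i (Finset.mem_range.mpr hi)).le
  exact top_unique <| le_of_tendsto
    (ENNReal.tendsto_ofReal_atTop.comp (tendsto_div_log_pow_atTop n))
    ((eventually_ge_atTop _).mono markov)

/-- If `F(x) = 1 - 1/log x` for all large `x`, then every trimmed sum `S_n^{b_n}` with
`b_n < n` has infinite expectation. -/
theorem stmt_8
    {Ω : Type*} [MeasurableSpace Ω] (μ : Measure Ω) [IsProbabilityMeasure μ]
    (X : ℕ → Ω → ℝ) (hmeas : ∀ i, Measurable (X i))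
    (hindep : iIndepFun X μ)
    (hident : ∀ i, IdentDistrib (X i) (X 0) μ μ)
    (hnonneg : ∀ i ω, 0 ≤ X i ω)
    (x₀ : ℝ)
    (hF : ∀ x : ℝ, x₀ ≤ x → (μ {ω | X 0 ω ≤ x}).toReal = 1 - 1 / Real.log x) :
    ∀ n b : ℕ, b < n →
      ∫⁻ ω, ENNReal.ofReal (trimmedSum n b fun k => X k ω) ∂μ = ⊤ :=
  stmt_8_general μ X hindep hident hnonneg x₀ hF
end

section
/- Let B_1, ..., B_N be i.i.d. Bernoulli random variables with success probability q, and suppose (3/2)·q·N ≤ C for some C. Then P(max_{j ≤ N} |q·j - Σ_{k=1}^j B_k| ≥ C) ≤ 2·exp(-(3/4)·q·N). -/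
open MeasureTheory ProbabilityTheory Real

/-!
For `t = ±1` the process `exp (t * (S j - q * j))`, with `S j = ∑ k < j, B k`, is the product
`∏ k < j, exp (t * (B k - q))` of independent nonnegative factors whose means are at least `1`
(convexity of `exp`), hence a nonnegative submartingale for the filtration of the strict past.
Doob's maximal inequality bounds the probability that it reaches `exp C` by
`exp (-C) * ∏ k < N, 𝔼[exp (t * (B k - q))] ≤ exp (q * N * (exp t - 1 - t) - C)`.
As `exp t - 1 - t ≤ 3 / 4` for `t = ±1` and `C ≥ (3 / 2) * q * N`, each one-sided bound is
`exp (-(3 / 4) * q * N)`, and the two sides add up to the factor `2`.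
-/

namespace ProbabilityTheory

open Finset

section IndependentProduct

variable {Ω : Type*} {m : MeasurableSpace Ω} {μ : Measure Ω} {Y : ℕ → Ω → ℝ}

/-- Unlike `Filtration.natural`, the index is strict, so that `Y n` is independent of
`pastFiltration Y hY n`. -/
def pastFiltration (Y : ℕ → Ω → ℝ) (hY : ∀ k, Measurable (Y k)) : Filtration ℕ m where
  seq n := ⨆ k < n, MeasurableSpace.comap (Y k) inferInstance
  mono' _ _ hij := biSup_mono fun _ hk => lt_of_lt_of_le hk hij
  le' _ := iSup₂_le fun k _ => (hY k).comap_le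

lemma measurable_pastFiltration (hY : ∀ k, Measurable (Y k)) {k n : ℕ} (hkn : k < n) :
    Measurable[pastFiltration Y hY n] (Y k) :=
  Measurable.of_comap_le (le_biSup (fun k => MeasurableSpace.comap (Y k) inferInstance) hkn)

lemma indep_comap_pastFiltration (hY : ∀ k, Measurable (Y k)) (hind : iIndepFun Y μ) (n : ℕ) :
    Indep (MeasurableSpace.comap (Y n) inferInstance) (pastFiltration Y hY n) μ := by
  have hsplit := indep_iSup_of_disjoint (fun k => (hY k).comap_le)
    ((iIndepFun_iff_iIndep _ _ _).1 hind) (S := {n}) (T := Set.Iio n) (by simp)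
  exact indep_of_indep_of_le_left hsplit
    (le_biSup (fun k => MeasurableSpace.comap (Y k) inferInstance) (Set.mem_singleton n))

lemma measurable_prod_range_pastFiltration (hY : ∀ k, Measurable (Y k)) (n : ℕ) :
    Measurable[pastFiltration Y hY n] (∏ k ∈ range n, Y k) := by
  rw [prod_fn]
  exact Finset.measurable_prod _ fun k hk => measurable_pastFiltration hY (mem_range.1 hk)

lemma indepFun_prod_range (hY : ∀ k, Measurable (Y k)) (hind : iIndepFun Y μ) (n : ℕ) :
    IndepFun (∏ k ∈ range n, Y k) (Y n) μ := by
  rw [IndepFun_iff_Indep]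
  exact indep_of_indep_of_le_left (indep_comap_pastFiltration hY hind n).symm
    (measurable_prod_range_pastFiltration hY n).comap_le

lemma integrable_prod_range (hY : ∀ k, Measurable (Y k)) (hind : iIndepFun Y μ)
    (hint : ∀ k, Integrable (Y k) μ) (n : ℕ) : Integrable (∏ k ∈ range n, Y k) μ := by
  induction n with
  | zero => have := hind.isProbabilityMeasure; exact integrable_const (1 : ℝ)
  | succ n ih =>
    rw [prod_range_succ]
    exact (indepFun_prod_range hY hind n).integrable_mul ih (hint n)

lemma integral_prod_range (hY : ∀ k, Measurable (Y k)) (hind : iIndepFun Y μ) (n : ℕ) :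
    μ[∏ k ∈ range n, Y k] = ∏ k ∈ range n, μ[Y k] := by
  induction n with
  | zero => have := hind.isProbabilityMeasure; simp
  | succ n ih =>
    rw [prod_range_succ, (indepFun_prod_range hY hind n).integral_mul_eq_mul_integral
      (Finset.aestronglyMeasurable_prod _ fun k _ => (hY k).aestronglyMeasurable)
      (hY n).aestronglyMeasurable, ih, prod_range_succ]

lemma submartingale_prod_range [IsFiniteMeasure μ] (hY : ∀ k, Measurable (Y k))
    (hind : iIndepFun Y μ) (hnonneg : ∀ k ω, 0 ≤ Y k ω) (hint : ∀ k, Integrable (Y k) μ)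
    (hone : ∀ k, 1 ≤ μ[Y k]) :
    Submartingale (fun n => ∏ k ∈ range n, Y k) (pastFiltration Y hY) μ := by
  refine submartingale_nat (fun n => ?_) (integrable_prod_range hY hind hint) fun n => ?_
  · exact (measurable_prod_range_pastFiltration hY n).stronglyMeasurable
  · have hpull := condExp_mul_of_stronglyMeasurable_left
      (measurable_prod_range_pastFiltration hY n).stronglyMeasurable
      (by rw [← prod_range_succ]; exact integrable_prod_range hY hind hint (n + 1)) (hint n)
    have hmean := condExp_indep_eq (hY n).comap_le ((pastFiltration Y hY).le n)
      (comap_measurable (Y n)).stronglyMeasurable (indep_comap_pastFiltration hY hind n)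
    rw [prod_range_succ]
    filter_upwards [hpull, hmean] with ω hpull hmean
    rw [hpull, Pi.mul_apply, hmean, prod_apply]
    exact le_mul_of_one_le_right (prod_nonneg fun k _ => hnonneg k ω) (hone n)

theorem measure_exists_le_prod_range_le [IsFiniteMeasure μ] (hY : ∀ k, Measurable (Y k))
    (hind : iIndepFun Y μ) (hnonneg : ∀ k ω, 0 ≤ Y k ω) (hint : ∀ k, Integrable (Y k) μ)
    (hone : ∀ k, 1 ≤ μ[Y k]) {ε : ℝ} (hε : 0 < ε) (n : ℕ) :
    μ {ω | ∃ j ≤ n, ε ≤ ∏ k ∈ range j, Y k ω}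
      ≤ ENNReal.ofReal ((∏ k ∈ range n, μ[Y k]) / ε) := by
  have hprod_nonneg : ∀ j, 0 ≤ ∏ k ∈ range j, Y k := fun j => prod_nonneg fun k _ => hnonneg k
  have hdoob := maximal_ineq (submartingale_prod_range hY hind hnonneg hint hone) hprod_nonneg
    (ε := ε.toNNReal) n
  rw [Real.coe_toNNReal _ hε.le] at hdoob
  have hevent : {ω | ∃ j ≤ n, ε ≤ ∏ k ∈ range j, Y k ω} =
      {ω | ε ≤ (range (n + 1)).sup' nonempty_range_add_one fun j => (∏ k ∈ range j, Y k) ω} := by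
    ext ω
    simp [le_sup'_iff]
  rw [← hevent] at hdoob
  rw [ENNReal.ofReal_div_of_pos hε, ENNReal.le_div_iff_mul_le (by simp [hε]) (by simp), mul_comm]
  calc ENNReal.ofReal ε * μ {ω | ∃ j ≤ n, ε ≤ ∏ k ∈ range j, Y k ω}
      ≤ ENNReal.ofReal (∫ ω in {ω | ∃ j ≤ n, ε ≤ ∏ k ∈ range j, Y k ω},
          (∏ k ∈ range n, Y k) ω ∂μ) := hdoob
    _ ≤ ENNReal.ofReal (μ[∏ k ∈ range n, Y k]) :=
      ENNReal.ofReal_le_ofReal (setIntegral_le_integral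
        (integrable_prod_range hY hind hint n) (ae_of_all _ (hprod_nonneg n)))
    _ = ENNReal.ofReal (∏ k ∈ range n, μ[Y k]) := by rw [integral_prod_range hY hind n]

end IndependentProduct

section Bernoulli

variable {Ω : Type*} {m : MeasurableSpace Ω} {μ : Measure Ω} {B : Ω → ℝ} {q : ℝ}

lemma integrable_of_bernoulli [IsFiniteMeasure μ] (hmeas : Measurable B)
    (hB : ∀ ω, B ω = 0 ∨ B ω = 1) : Integrable B μ :=
  .of_bound hmeas.aestronglyMeasurable 1 <| ae_of_all _ fun ω => by
    rcases hB ω with h | h <;> simp [h]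

lemma integral_of_bernoulli (hmeas : Measurable B) (hB : ∀ ω, B ω = 0 ∨ B ω = 1)
    (hlaw : μ {ω | B ω = 1} = ENNReal.ofReal q) (hq0 : 0 ≤ q) : μ[B] = q := by
  have hind : B = {ω | B ω = 1}.indicator 1 := by
    funext ω
    rcases hB ω with h | h <;> simp [h]
  rw [hind, integral_indicator_one (measurableSet_eq_fun hmeas measurable_const),
    measureReal_def, hlaw, ENNReal.toReal_ofReal hq0]

lemma exp_mul_sub_of_bernoulli (hB : ∀ ω, B ω = 0 ∨ B ω = 1) (t q : ℝ) :
    (fun ω => exp (t * (B ω - q))) = fun ω => exp (-(t * q)) * (1 + (exp t - 1) * B ω) := by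
  funext ω
  rcases hB ω with h | h
  · simp [h]
  · simp [h, ← exp_add]
    ring

lemma integral_exp_mul_sub_of_bernoulli [IsProbabilityMeasure μ] (hmeas : Measurable B)
    (hB : ∀ ω, B ω = 0 ∨ B ω = 1) (hlaw : μ {ω | B ω = 1} = ENNReal.ofReal q) (hq0 : 0 ≤ q)
    (t : ℝ) :
    μ[fun ω => exp (t * (B ω - q))] = exp (-(t * q)) * (1 + q * (exp t - 1)) := by
  rw [exp_mul_sub_of_bernoulli hB, integral_const_mul,
    integral_add (integrable_const 1) ((integrable_of_bernoulli hmeas hB).const_mul _),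
    integral_const_mul, integral_of_bernoulli hmeas hB hlaw hq0]
  simp [mul_comm]

variable [IsProbabilityMeasure μ]

lemma one_le_integral_exp_mul_sub_of_bernoulli (hmeas : Measurable B)
    (hB : ∀ ω, B ω = 0 ∨ B ω = 1) (hlaw : μ {ω | B ω = 1} = ENNReal.ofReal q) (hq0 : 0 ≤ q)
    (hq1 : q ≤ 1) (t : ℝ) : 1 ≤ μ[fun ω => exp (t * (B ω - q))] := by
  have hconvex := convexOn_exp.2 (Set.mem_univ 0) (Set.mem_univ t) (sub_nonneg.2 hq1) hq0
    (by ring)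
  simp only [smul_eq_mul, mul_zero, zero_add, exp_zero] at hconvex
  rw [integral_exp_mul_sub_of_bernoulli hmeas hB hlaw hq0]
  calc (1 : ℝ) = exp (-(t * q)) * exp (q * t) := by
        rw [← exp_add, mul_comm q, neg_add_cancel, exp_zero]
    _ ≤ exp (-(t * q)) * (1 + q * (exp t - 1)) := by gcongr; linarith

lemma integral_exp_mul_sub_of_bernoulli_le (hmeas : Measurable B)
    (hB : ∀ ω, B ω = 0 ∨ B ω = 1) (hlaw : μ {ω | B ω = 1} = ENNReal.ofReal q) (hq0 : 0 ≤ q)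
    (t : ℝ) : μ[fun ω => exp (t * (B ω - q))] ≤ exp (q * (exp t - 1 - t)) := by
  rw [integral_exp_mul_sub_of_bernoulli hmeas hB hlaw hq0,
    show q * (exp t - 1 - t) = -(t * q) + q * (exp t - 1) by ring, exp_add]
  gcongr
  linarith [add_one_le_exp (q * (exp t - 1))]

theorem measure_exists_le_mul_sum_sub_le_of_bernoulli {B : ℕ → Ω → ℝ}
    (hmeas : ∀ i, Measurable (B i)) (hindep : iIndepFun B μ) (hq0 : 0 ≤ q) (hq1 : q ≤ 1)
    (hB : ∀ i ω, B i ω = 0 ∨ B i ω = 1) (hlaw : ∀ i, μ {ω | B i ω = 1} = ENNReal.ofReal q)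
    (N : ℕ) (C t : ℝ) :
    μ {ω | ∃ j ≤ N, C ≤ t * (∑ k ∈ range j, B k ω - q * j)}
      ≤ ENNReal.ofReal (exp (q * N * (exp t - 1 - t) - C)) := by
  set Y : ℕ → Ω → ℝ := fun k ω => exp (t * (B k ω - q))
  have hY : ∀ k, Measurable (Y k) := fun k => by fun_prop
  have hYind : iIndepFun Y μ := hindep.comp (fun _ x => exp (t * (x - q))) fun _ => by fun_prop
  have hYint : ∀ k, Integrable (Y k) μ := fun k => by
    simp only [Y, exp_mul_sub_of_bernoulli (hB k)]
    exact ((integrable_const 1).add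
      ((integrable_of_bernoulli (hmeas k) (hB k)).const_mul _)).const_mul _
  have hevent : {ω | ∃ j ≤ N, C ≤ t * (∑ k ∈ range j, B k ω - q * j)} =
      {ω | ∃ j ≤ N, exp C ≤ ∏ k ∈ range j, Y k ω} := by
    ext ω
    simp only [Y, Set.mem_ofPred_eq, ← exp_sum, exp_le_exp, ← mul_sum, sum_sub_distrib, sum_const,
      card_range, nsmul_eq_mul, mul_comm q]
  calc μ {ω | ∃ j ≤ N, C ≤ t * (∑ k ∈ range j, B k ω - q * j)}
      ≤ ENNReal.ofReal ((∏ k ∈ range N, μ[Y k]) / exp C) := by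
        rw [hevent]
        exact measure_exists_le_prod_range_le hY hYind (fun k ω => (exp_pos _).le) hYint
          (fun k => one_le_integral_exp_mul_sub_of_bernoulli (hmeas k) (hB k) (hlaw k) hq0 hq1 t)
          (exp_pos C) N
    _ ≤ ENNReal.ofReal (exp (q * (exp t - 1 - t)) ^ N / exp C) := by
        gcongr
        calc ∏ k ∈ range N, μ[Y k] ≤ ∏ _k ∈ range N, exp (q * (exp t - 1 - t)) :=
              prod_le_prod (fun k _ => integral_nonneg fun ω => (exp_pos _).le) fun k _ =>
                integral_exp_mul_sub_of_bernoulli_le (hmeas k) (hB k) (hlaw k) hq0 t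
          _ = exp (q * (exp t - 1 - t)) ^ N := by rw [prod_const, card_range]
    _ = ENNReal.ofReal (exp (q * N * (exp t - 1 - t) - C)) := by
        rw [← exp_nat_mul, ← exp_sub]
        ring_nf

end Bernoulli

end ProbabilityTheory

/-- Maximal Bernstein bound for i.i.d. Bernoulli(q) variables: if `(3/2) q N ≤ C` then
`P(max_{j ≤ N} |q j − Σ_{k=1}^j B_k| ≥ C) ≤ 2 exp(−(3/4) q N)`. -/
theorem stmt_13
    {Ω : Type*} [MeasurableSpace Ω] (μ : Measure Ω) [IsProbabilityMeasure μ]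
    (B : ℕ → Ω → ℝ) (hmeas : ∀ i, Measurable (B i))
    (hindep : iIndepFun B μ)
    (q : ℝ) (hq0 : 0 ≤ q) (hq1 : q ≤ 1)
    (hBernoulli : ∀ i ω, B i ω = 0 ∨ B i ω = 1)
    (hlaw : ∀ i, μ {ω | B i ω = 1} = ENNReal.ofReal q)
    (N : ℕ) (C : ℝ) (hC : 3 / 2 * q * N ≤ C) :
    μ {ω | ∃ j ≤ N, C ≤ |q * j - ∑ k ∈ Finset.range j, B k ω|}
      ≤ ENNReal.ofReal (2 * Real.exp (-(3 / 4) * q * N)) := by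
  have hqN : 0 ≤ q * N := mul_nonneg hq0 N.cast_nonneg
  have hbound (t : ℝ) (ht : exp t - 1 - t ≤ 3 / 4) :
      μ {ω | ∃ j ≤ N, C ≤ t * (∑ k ∈ Finset.range j, B k ω - q * j)}
        ≤ ENNReal.ofReal (exp (-(3 / 4) * q * N)) := by
    refine (measure_exists_le_mul_sum_sub_le_of_bernoulli hmeas hindep hq0 hq1 hBernoulli hlaw
      N C t).trans (ENNReal.ofReal_le_ofReal (exp_le_exp.2 ?_))
    nlinarith [mul_le_mul_of_nonneg_left ht hqN]
  have hupper := hbound 1 (by linarith [exp_one_lt_d9])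
  have hlower := hbound (-1) (by linarith [exp_neg_one_lt_d9])
  calc μ {ω | ∃ j ≤ N, C ≤ |q * j - ∑ k ∈ Finset.range j, B k ω|}
      ≤ μ ({ω | ∃ j ≤ N, C ≤ 1 * (∑ k ∈ Finset.range j, B k ω - q * j)} ∪
          {ω | ∃ j ≤ N, C ≤ -1 * (∑ k ∈ Finset.range j, B k ω - q * j)}) := by
        refine measure_mono fun ω ⟨j, hj, hCj⟩ => (le_abs.1 hCj).elim ?_ ?_
        · exact fun h => Or.inr ⟨j, hj, by linarith⟩
        · exact fun h => Or.inl ⟨j, hj, by linarith⟩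
    _ ≤ ENNReal.ofReal (exp (-(3 / 4) * q * N)) + ENNReal.ofReal (exp (-(3 / 4) * q * N)) :=
        (measure_union_le _ _).trans (add_le_add hupper hlower)
    _ = ENNReal.ofReal (2 * exp (-(3 / 4) * q * N)) := by
        rw [← ENNReal.ofReal_add (exp_pos _).le (exp_pos _).le, two_mul]
end

section
/- On the product probability space Ω = ∏_{n=1}^∞ ([0,1], Borel, Lebesgue), define for a sequence (p_n) in [0,1] the indicator random variables A_{n,k} = 1_{{π_k ≤ p_n}} where π_k is the k-th coordinate projection. Fix 0 < ε < 1/4 and ψ : ℕ → ℝ_{>0} with Σ 1/ψ(n) < ∞, and set c(k,n) = 8·(max{k, log ψ(⌊log n⌋)})^{1/2+ε}·(log ψ(⌊log n⌋))^{1/2-ε}. Then P(|p_n·n − Σ_{k=1}^n A_{n,k}| ≥ c(p_n·n, n) infinitely often) = 0. -/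
/-!
Write `S(t, n) = #{k < n : U_k ≤ t}` and group the times `n` into blocks `⌊log n⌋ = m`, with
`L = log ψ(m)` and `D = ⌊e^{m+1}⌋`, so that `n ≤ D ≤ 2.8 n` inside the block. Since `S` is
monotone in `t` and in `n`, it suffices to control it on a finite grid: on the level `q = j / D`
the times are spaced so that the mean count grows by at most `w_j / 5` between consecutive nodes,
where `w_j = L r_j^{1/2+ε}` and `r_j = max (j / L) 1`. A Bernstein-type Chernoff bound gives
probability at most `2 exp (-2 L r_j^{2ε})` for a deviation `3.4 w_j` at a node; a row has `O(r_j)`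
nodes and `r³ exp (-2 L r^{2ε}) ≤ exp (-2 L)` once `ε L ≥ 1`, so with `∑_j r_j^{-2} = O(L)` the
whole grid fails with probability `O(L e^{-2L}) = O(1 / ψ(m))`. This is summable, so by
Borel–Cantelli almost surely only finitely many blocks fail, and on a good block sandwiching
`S(t, n)` between neighbouring grid points gives the deviation bound `8 w`, with
`8 w(p_n n) = c(p_n n, n)`.
-/

open MeasureTheory ProbabilityTheory Filter Real

section Count

variable {Ω : Type*} {U : ℕ → Ω → ℝ}

noncomputable def countLE (U : ℕ → Ω → ℝ) (q : ℝ) (n : ℕ) (ω : Ω) : ℝ :=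
  ∑ k ∈ Finset.range n, if U k ω ≤ q then (1 : ℝ) else 0

lemma countLE_nonneg (q : ℝ) (n : ℕ) (ω : Ω) : 0 ≤ countLE U q n ω :=
  Finset.sum_nonneg fun _ _ => by positivity

lemma countLE_le (q : ℝ) (n : ℕ) (ω : Ω) : countLE U q n ω ≤ n := by
  have : countLE U q n ω ≤ ∑ _k ∈ Finset.range n, (1 : ℝ) :=
    Finset.sum_le_sum fun k _ => by split <;> norm_num
  simpa using this

lemma countLE_mono {q q' : ℝ} {n n' : ℕ} (hq : q ≤ q') (hn : n ≤ n') (ω : Ω) :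
    countLE U q n ω ≤ countLE U q' n' ω := by
  refine (Finset.sum_le_sum fun k _ => ?_).trans
    (Finset.sum_le_sum_of_subset_of_nonneg (Finset.range_subset_range.2 hn)
      fun _ _ _ => by positivity)
  by_cases h : U k ω ≤ q
  · simp [h, h.trans hq]
  · simp only [h, if_false]; positivity

end Count

section Chernoff

variable {Ω : Type*} [MeasurableSpace Ω] {μ : Measure Ω} [IsProbabilityMeasure μ]

lemma exp_le_one_add_add_sq {x : ℝ} (hx : |x| ≤ 1) : exp x ≤ 1 + x + 3 / 4 * x ^ 2 := by
  have h := abs_le.1 (Real.exp_bound hx (n := 2) (by norm_num))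
  norm_num [Finset.sum_range_succ, Nat.factorial, sq_abs] at h
  linarith [h.2]

lemma mgf_ite_mem {A : Set Ω} [DecidablePred (· ∈ A)] (hA : MeasurableSet A) (l : ℝ) :
    mgf (fun ω => if ω ∈ A then (1 : ℝ) else 0) μ l = 1 + μ.real A * (exp l - 1) := by
  have h : (fun ω => exp (l * if ω ∈ A then (1 : ℝ) else 0))
      = fun ω => A.indicator (fun _ => exp l - 1) ω + 1 := by
    ext ω
    by_cases hω : ω ∈ A <;> simp [hω]
  rw [mgf, h, integral_add ((integrable_const _).indicator hA) (integrable_const 1),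
    integral_indicator_const _ hA]
  simp only [smul_eq_mul, integral_const, probReal_univ, mul_one]
  ring

variable {U : ℕ → Ω → ℝ} {q : ℝ}

lemma mgf_countLE (hmeas : ∀ k, Measurable (U k)) (hindep : iIndepFun U μ)
    (hcdf : ∀ k, μ.real {ω | U k ω ≤ q} = q) (n : ℕ) (l : ℝ) :
    mgf (countLE U q n) μ l = (1 + q * (exp l - 1)) ^ n := by
  have hind : iIndepFun (fun k ω => if U k ω ≤ q then (1 : ℝ) else 0) μ :=
    hindep.comp (fun _ x => if x ≤ q then (1 : ℝ) else 0)
      fun _ => Measurable.ite measurableSet_Iic measurable_const measurable_const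
  have hsum : countLE U q n = ∑ k ∈ Finset.range n, fun ω => if U k ω ≤ q then (1 : ℝ) else 0 := by
    ext ω; simp [countLE]
  rw [hsum, hind.mgf_sum fun k => Measurable.ite (measurableSet_le (hmeas k) measurable_const)
    measurable_const measurable_const]
  have hk (k : ℕ) : mgf (fun ω => if U k ω ≤ q then (1 : ℝ) else 0) μ l = 1 + q * (exp l - 1) := by
    rw [← congrArg (fun x => 1 + x * (exp l - 1)) (hcdf k)]
    exact mgf_ite_mem (μ := μ) (A := {ω | U k ω ≤ q})
      (measurableSet_le (hmeas k) measurable_const) l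
  simp [hk]

lemma mgf_countLE_sub_le (hmeas : ∀ k, Measurable (U k)) (hindep : iIndepFun U μ)
    (hcdf : ∀ k, μ.real {ω | U k ω ≤ q} = q) (hq0 : 0 ≤ q) (hq1 : q ≤ 1) (n : ℕ) {l : ℝ}
    (hl : |l| ≤ 1) :
    mgf (fun ω => countLE U q n ω - q * n) μ l ≤ exp (3 / 4 * (q * n) * l ^ 2) := by
  simp_rw [sub_eq_add_neg]
  rw [mgf_add_const, mgf_countLE hmeas hindep hcdf]
  calc (1 + q * (exp l - 1)) ^ n * exp (l * -(q * n))
      ≤ exp (q * (exp l - 1)) ^ n * exp (l * -(q * n)) := by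
        gcongr
        · nlinarith [exp_pos l]
        · linarith [add_one_le_exp (q * (exp l - 1))]
    _ = exp (q * n * (exp l - 1 - l)) := by rw [← exp_nat_mul, ← exp_add]; ring_nf
    _ ≤ exp (3 / 4 * (q * n) * l ^ 2) := by
        have : exp l - 1 - l ≤ 3 / 4 * l ^ 2 := by linarith [exp_le_one_add_add_sq hl]
        have : 0 ≤ q * n := by positivity
        exact exp_le_exp.2 (by nlinarith)

lemma measureReal_le_abs_countLE_sub_le (hmeas : ∀ k, Measurable (U k)) (hindep : iIndepFun U μ)
    (hcdf : ∀ k, μ.real {ω | U k ω ≤ q} = q) (hq0 : 0 ≤ q) (hq1 : q ≤ 1) (n : ℕ) (θ : ℝ)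
    {l : ℝ} (hl0 : 0 ≤ l) (hl1 : l ≤ 1) :
    μ.real {ω | θ ≤ |countLE U q n ω - q * n|} ≤ 2 * exp (-l * θ + 3 / 4 * (q * n) * l ^ 2) := by
  set X := fun ω => countLE U q n ω - q * n
  have hX : Measurable X := (Finset.measurable_sum _ fun k _ => Measurable.ite
    (measurableSet_le (hmeas k) measurable_const) measurable_const measurable_const).sub_const _
  have hXmem : ∀ᵐ ω ∂μ, X ω ∈ Set.Icc (-(q * n)) (n - q * n) := ae_of_all _ fun ω =>
    ⟨by linarith [countLE_nonneg (U := U) q n ω], by linarith [countLE_le (U := U) q n ω]⟩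
  have hmgf (s : ℝ) (hs : |s| ≤ 1) : mgf X μ s ≤ exp (3 / 4 * (q * n) * s ^ 2) :=
    mgf_countLE_sub_le hmeas hindep hcdf hq0 hq1 n hs
  have habs : |l| ≤ 1 := abs_le.2 ⟨by linarith, hl1⟩
  have hupper : μ.real {ω | θ ≤ X ω} ≤ exp (-l * θ + 3 / 4 * (q * n) * l ^ 2) := by
    refine (measure_ge_le_exp_mul_mgf θ hl0 (integrable_exp_mul_of_mem_Icc
      hX.aemeasurable hXmem)).trans ?_
    rw [exp_add]
    exact mul_le_mul_of_nonneg_left (hmgf l habs) (exp_pos _).le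
  have hlower : μ.real {ω | θ ≤ (-X) ω} ≤ exp (-l * θ + 3 / 4 * (q * n) * l ^ 2) := by
    refine (measure_ge_le_exp_mul_mgf θ hl0 (integrable_exp_mul_of_mem_Icc
      hX.neg.aemeasurable (hXmem.mono fun ω h => ⟨neg_le_neg h.2, neg_le_neg h.1⟩))).trans ?_
    rw [exp_add, mgf_neg, ← neg_sq]
    exact mul_le_mul_of_nonneg_left (hmgf (-l) (by rwa [abs_neg])) (exp_pos _).le
  calc μ.real {ω | θ ≤ |X ω|}
      ≤ μ.real ({ω | θ ≤ X ω} ∪ {ω | θ ≤ (-X) ω}) :=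
        measureReal_mono fun ω (hω : θ ≤ |X ω|) => (le_abs.1 hω : θ ≤ X ω ∨ θ ≤ -X ω)
    _ ≤ _ := (measureReal_union_le _ _).trans (by linarith)

lemma measureReal_le_abs_countLE_sub_le_exp_min (hmeas : ∀ k, Measurable (U k))
    (hindep : iIndepFun U μ) (hcdf : ∀ k, μ.real {ω | U k ω ≤ q} = q) (hq0 : 0 ≤ q)
    (hq1 : q ≤ 1) (n : ℕ) {θ b : ℝ} (hθ : 0 ≤ θ) (hb : q * n ≤ b) (hb0 : 0 < b) :
    μ.real {ω | θ ≤ |countLE U q n ω - q * n|} ≤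
      2 * exp (-min (θ ^ 2 / (4 * b)) (3 / 4 * θ)) := by
  have hqn : 0 ≤ q * n := by positivity
  rcases le_or_gt θ (3 * b) with hθb | hθb
  · refine (measureReal_le_abs_countLE_sub_le hmeas hindep hcdf hq0 hq1 n θ
      (l := θ / (3 * b)) (by positivity) ((div_le_one (by positivity)).2 hθb)).trans ?_
    gcongr
    have : 3 / 4 * (q * n) * (θ / (3 * b)) ^ 2 ≤ 3 / 4 * b * (θ / (3 * b)) ^ 2 := by gcongr
    have : -(θ / (3 * b)) * θ + 3 / 4 * b * (θ / (3 * b)) ^ 2 = -(θ ^ 2 / (4 * b)) := by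
      field_simp; ring
    linarith [min_le_left (θ ^ 2 / (4 * b)) (3 / 4 * θ)]
  · refine (measureReal_le_abs_countLE_sub_le hmeas hindep hcdf hq0 hq1 n θ
      (l := 1) zero_le_one le_rfl).trans ?_
    gcongr
    linarith [min_le_right (θ ^ 2 / (4 * b)) (3 / 4 * θ)]

end Chernoff

section Scale

variable {ε L : ℝ}

noncomputable def level (L x : ℝ) : ℝ := max (x / L) 1

noncomputable def width (ε L x : ℝ) : ℝ := L * level L x ^ (1 / 2 + ε)

lemma one_le_level (L x : ℝ) : 1 ≤ level L x := le_max_right _ _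

lemma level_pos (L x : ℝ) : 0 < level L x := one_pos.trans_le (one_le_level L x)

lemma le_mul_level (hL : 0 < L) (x : ℝ) : x ≤ L * level L x := by
  rw [← div_le_iff₀' hL]; exact le_max_left _ _

lemma level_mono {x y : ℝ} (hL : 0 < L) (h : x ≤ y) : level L x ≤ level L y :=
  max_le_max (div_le_div_of_nonneg_right h hL.le) le_rfl

lemma le_width (hε : 0 < ε) (hL : 0 < L) (x : ℝ) : L ≤ width ε L x :=
  le_mul_of_one_le_right hL.le (one_le_rpow (one_le_level L x) (by linarith))

lemma width_mono {x y : ℝ} (hε : 0 < ε) (hL : 0 < L) (h : x ≤ y) : width ε L x ≤ width ε L y := by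
  unfold width
  gcongr
  · exact (level_pos L x).le
  · exact level_mono hL h

lemma width_eq (hL : 0 < L) (x : ℝ) :
    width ε L x = max x L ^ (1 / 2 + ε) * L ^ (1 / 2 - ε) := by
  have hlev : level L x = max x L / L := by
    rw [level, ← div_self hL.ne', max_div_div_right hL.le]
  rw [width, hlev, div_rpow (le_max_of_le_right hL.le) hL.le,
    show (1 / 2 - ε) = 1 - (1 / 2 + ε) by ring, rpow_sub hL, rpow_one]
  field_simp

lemma width_le_of_le {x y : ℝ} (hε : 0 < ε) (hε' : ε < 1 / 4) (hL : 100 ≤ L)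
    (hxy : x ≤ 14 / 5 * y + 1) : width ε L x ≤ 11 / 5 * width ε L y := by
  have hL0 : 0 < L := by linarith
  have hlev : level L x ≤ 281 / 100 * level L y := by
    refine max_le ?_ (by linarith [one_le_level L y])
    rw [div_le_iff₀ hL0]
    have : y / L ≤ level L y := le_max_left _ _
    rw [div_le_iff₀ hL0] at this
    nlinarith [one_le_level L y]
  have hconst : (281 / 100 : ℝ) ^ (1 / 2 + ε) ≤ 11 / 5 := by
    calc (281 / 100 : ℝ) ^ (1 / 2 + ε) ≤ (281 / 100 : ℝ) ^ ((3 : ℝ) / 4) :=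
          rpow_le_rpow_of_exponent_le (by norm_num) (by linarith)
      _ = (((281 / 100 : ℝ) ^ 3) ^ ((1 : ℝ) / 4)) := by
          rw [← rpow_natCast, ← rpow_mul (by norm_num)]; norm_num
      _ ≤ (((11 / 5 : ℝ) ^ 4) ^ ((1 : ℝ) / 4)) := by gcongr; norm_num
      _ = 11 / 5 := by rw [← rpow_natCast, ← rpow_mul (by norm_num)]; norm_num
  calc width ε L x ≤ L * (281 / 100 * level L y) ^ (1 / 2 + ε) := by
        unfold width
        gcongr
        exact (level_pos L x).le
    _ = (281 / 100 : ℝ) ^ (1 / 2 + ε) * width ε L y := by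
        rw [width, mul_rpow (by norm_num) (level_pos L y).le]; ring
    _ ≤ 11 / 5 * width ε L y := by
        gcongr
        exact mul_nonneg hL0.le (rpow_nonneg (level_pos L y).le _)

end Scale

section Grid

variable {ε L : ℝ}

noncomputable def gridStep (ε L : ℝ) (D j : ℕ) : ℕ := ⌊D * width ε L j / (5 * (j + 1))⌋₊ + 1

noncomputable def gridNode (ε L : ℝ) (D j i : ℕ) : ℕ := min (i * gridStep ε L D j) D

lemma gridStep_pos (D j : ℕ) : 0 < gridStep ε L D j := Nat.succ_pos _

lemma gridStep_le (hε : 0 < ε) (hL : 0 < L) (D j : ℕ) :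
    (gridStep ε L D j : ℝ) ≤ D * width ε L j / (5 * (j + 1)) + 1 := by
  rw [gridStep]; push_cast
  gcongr
  exact Nat.floor_le (div_nonneg (mul_nonneg (Nat.cast_nonneg D)
    (hL.le.trans (le_width hε hL _))) (by positivity))

lemma gridNode_le (D j i : ℕ) : gridNode ε L D j i ≤ D := min_le_right _ _

lemma gridNode_div_le {D n : ℕ} (hn : n ≤ D) (j : ℕ) :
    gridNode ε L D j (n / gridStep ε L D j) ≤ n ∧
      n < gridNode ε L D j (n / gridStep ε L D j) + gridStep ε L D j := by
  have h := Nat.div_mul_le_self n (gridStep ε L D j)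
  rw [gridNode, min_eq_left (h.trans hn)]
  exact ⟨h, Nat.lt_div_mul_add (gridStep_pos D j)⟩

lemma le_gridNode_div_add_one {D n : ℕ} (hn : n ≤ D) (j : ℕ) :
    n ≤ gridNode ε L D j (n / gridStep ε L D j + 1) ∧
      gridNode ε L D j (n / gridStep ε L D j + 1) ≤ n + gridStep ε L D j := by
  have h := Nat.lt_div_mul_add (a := n) (gridStep_pos (ε := ε) (L := L) D j)
  have h' := Nat.div_mul_le_self n (gridStep ε L D j)
  refine ⟨le_min (by rw [add_one_mul]; omega) hn, (min_le_left _ _).trans ?_⟩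
  rw [add_one_mul]; omega

lemma mul_gridStep_le (hε : 0 < ε) (hL : 0 < L) {D j : ℕ} {q : ℝ} (hq0 : 0 ≤ q) (hq1 : q ≤ 1)
    (hqj : q * D ≤ j + 1) : q * gridStep ε L D j ≤ width ε L j / 5 + 1 := by
  have hw := hL.le.trans (le_width hε hL (j : ℝ))
  calc q * gridStep ε L D j ≤ q * (D * width ε L j / (5 * (j + 1)) + 1) :=
        mul_le_mul_of_nonneg_left (gridStep_le hε hL D j) hq0
    _ = q * D / (j + 1) * (width ε L j / 5) + q := by field_simp
    _ ≤ width ε L j / 5 + 1 := by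
        gcongr
        exact mul_le_of_le_one_left (by positivity) ((div_le_one (by positivity)).2 hqj)

end Grid

section Interpolation

variable {Ω : Type*} {U : ℕ → Ω → ℝ} {ε L : ℝ}

/-- The threshold `17 / 5` is large enough for `measureReal_gridBad_le` (`(17 / 5)² / 4 > 2`) and
small enough for the interpolation (`(17 / 5 + 1 / 5) * 11 / 5 < 8`). -/
def gridBad (U : ℕ → Ω → ℝ) (ε L : ℝ) (D j i : ℕ) : Set Ω :=
  {ω | 17 / 5 * width ε L j ≤
    |countLE U (j / D) (gridNode ε L D j i) ω - j / D * gridNode ε L D j i|}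

def blockBad (U : ℕ → Ω → ℝ) (ε L : ℝ) (D : ℕ) : Set Ω :=
  ⋃ j ∈ Finset.range (D + 1), ⋃ i ∈ Finset.range (D / gridStep ε L D j + 2), gridBad U ε L D j i

lemma abs_countLE_gridNode_sub_lt {D j i : ℕ} {ω : Ω} (hω : ω ∉ blockBad U ε L D) (hj : j ≤ D)
    (hi : i ≤ D / gridStep ε L D j + 1) :
    |countLE U (j / D) (gridNode ε L D j i) ω - j / D * gridNode ε L D j i| <
      17 / 5 * width ε L j := by
  by_contra h
  exact hω (Set.mem_biUnion (Finset.mem_range.2 (Nat.lt_succ_of_le hj))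
    (Set.mem_biUnion (Finset.mem_range.2 (Nat.lt_succ_of_le hi)) (not_lt.1 h)))

lemma countLE_sub_lt_row {D k n : ℕ} {t : ℝ} {ω : Ω} (hω : ω ∉ blockBad U ε L D)
    (hk : k ≤ D) (hn : n ≤ D) (ht : t ≤ k / D) :
    countLE U t n ω - t * n <
      17 / 5 * width ε L k + k / D * gridStep ε L D k + (k / D - t) * n := by
  set s := gridStep ε L D k
  obtain ⟨hnn', hn's⟩ := le_gridNode_div_add_one (ε := ε) (L := L) hn k
  have hgood := abs_lt.1 (abs_countLE_gridNode_sub_lt hω hk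
    (Nat.succ_le_succ (Nat.div_le_div_right hn)))
  have hmono := countLE_mono (U := U) ht hnn' ω
  have hq : (0 : ℝ) ≤ k / D := by positivity
  have hn's' : (gridNode ε L D k (n / s + 1) : ℝ) ≤ n + s := by exact_mod_cast hn's
  nlinarith

lemma sub_countLE_lt_row {D k n : ℕ} {t : ℝ} {ω : Ω} (hω : ω ∉ blockBad U ε L D)
    (hk : k ≤ D) (hn : n ≤ D) (ht : k / D ≤ t) :
    t * n - countLE U t n ω <
      17 / 5 * width ε L k + t * gridStep ε L D k + (t - k / D) * n := by
  set s := gridStep ε L D k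
  obtain ⟨hn'n, hnn's⟩ := gridNode_div_le (ε := ε) (L := L) hn k
  have hgood := abs_lt.1 (abs_countLE_gridNode_sub_lt hω hk
    ((Nat.div_le_div_right hn).trans (Nat.le_succ _)))
  have hmono := countLE_mono (U := U) ht hn'n ω
  have hq : (0 : ℝ) ≤ k / D := by positivity
  have hn'n' : (gridNode ε L D k (n / s) : ℝ) ≤ n := by exact_mod_cast hn'n
  have hnn's' : (n : ℝ) ≤ gridNode ε L D k (n / s) + s := by exact_mod_cast hnn's.le
  nlinarith

lemma countLE_sub_lt_of_notMem_blockBad (hε : 0 < ε) (hL : 0 < L) {D n : ℕ} (hD : 0 < D)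
    (hnD : n ≤ D) {t : ℝ} (ht0 : 0 ≤ t) (ht1 : t ≤ 1) {ω : Ω} (hω : ω ∉ blockBad U ε L D) :
    countLE U t n ω - t * n < 18 / 5 * width ε L (⌊t * D⌋₊ + 1 : ℕ) + 2 := by
  set j := ⌊t * D⌋₊
  have hw := le_width hε hL ((j + 1 : ℕ) : ℝ)
  rcases ht1.lt_or_eq with ht1 | rfl
  · have hD' : (0 : ℝ) < D := by exact_mod_cast hD
    have hjt : (j : ℝ) ≤ t * D := Nat.floor_le (by positivity)
    have hj1D : j + 1 ≤ D := by
      have : (j : ℝ) < D := hjt.trans_lt (mul_lt_of_lt_one_left hD' ht1)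
      exact_mod_cast this
    have hq1 : ((j + 1 : ℕ) : ℝ) / D ≤ 1 := div_le_one_of_le₀ (by exact_mod_cast hj1D) hD'.le
    have hstep := mul_gridStep_le (D := D) (j := j + 1) hε hL (by positivity) hq1
      (by rw [div_mul_cancel₀ _ hD'.ne']; linarith)
    have hrow := countLE_sub_lt_row hω hj1D hnD (t := t)
      (by rw [le_div_iff₀ hD']; push_cast; linarith [Nat.lt_floor_add_one (t * D)])
    have hgap : (((j + 1 : ℕ) : ℝ) / D - t) * n ≤ 1 := by
      calc (((j + 1 : ℕ) : ℝ) / D - t) * n ≤ 1 / D * n := by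
            gcongr
            rw [sub_le_iff_le_add, div_le_iff₀ hD']; push_cast
            rw [add_mul, div_mul_cancel₀ _ hD'.ne']; linarith
        _ ≤ 1 := by rw [one_div_mul_eq_div]; exact div_le_one_of_le₀ (by exact_mod_cast hnD) hD'.le
    linarith
  · linarith [countLE_le (U := U) 1 n ω]

lemma sub_countLE_lt_of_notMem_blockBad (hε : 0 < ε) (hL : 0 < L) {D n : ℕ} (hD : 0 < D)
    (hnD : n ≤ D) {t : ℝ} (ht0 : 0 ≤ t) (ht1 : t ≤ 1) {ω : Ω} (hω : ω ∉ blockBad U ε L D) :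
    t * n - countLE U t n ω < 18 / 5 * width ε L (⌊t * D⌋₊ + 1 : ℕ) + 2 := by
  set j := ⌊t * D⌋₊
  have hD' : (0 : ℝ) < D := by exact_mod_cast hD
  have hjt : (j : ℝ) ≤ t * D := Nat.floor_le (by positivity)
  have htj : t * D < j + 1 := Nat.lt_floor_add_one _
  have hjD : j ≤ D := by
    have : (j : ℝ) ≤ D := hjt.trans (mul_le_of_le_one_left hD'.le ht1)
    exact_mod_cast this
  have hw := width_mono hε hL (show (j : ℝ) ≤ (j + 1 : ℕ) by push_cast; linarith)
  have hw0 := le_width hε hL (j : ℝ)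
  have hstep := mul_gridStep_le (D := D) (j := j) hε hL ht0 ht1 htj.le
  have hrow := sub_countLE_lt_row hω hjD hnD (t := t) (by rw [div_le_iff₀ hD']; linarith)
  have hgap : (t - j / D) * n ≤ 1 := by
    calc (t - j / D) * n ≤ 1 / D * n := by
          gcongr
          rw [sub_le_iff_le_add, ← add_div, le_div_iff₀ hD']; linarith
      _ ≤ 1 := by rw [one_div_mul_eq_div]; exact div_le_one_of_le₀ (by exact_mod_cast hnD) hD'.le
  linarith

lemma abs_sub_countLE_lt_of_notMem_blockBad (hε : 0 < ε) (hε' : ε < 1 / 4) (hL : 100 ≤ L)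
    {D n : ℕ} (hD : 0 < D) (hnD : n ≤ D) (hDn : (D : ℝ) ≤ 14 / 5 * n) {t : ℝ} (ht0 : 0 ≤ t)
    (ht1 : t ≤ 1) {ω : Ω} (hω : ω ∉ blockBad U ε L D) :
    |t * n - countLE U t n ω| < 8 * width ε L (t * n) := by
  have hL0 : 0 < L := by linarith
  have hwidth : width ε L (⌊t * D⌋₊ + 1 : ℕ) ≤ 11 / 5 * width ε L (t * n) := by
    refine width_le_of_le hε hε' hL ?_
    push_cast
    nlinarith [Nat.floor_le (by positivity : 0 ≤ t * D)]
  have hw := le_width hε hL0 (t * n)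
  rw [abs_sub_lt_iff]
  constructor
  · linarith [sub_countLE_lt_of_notMem_blockBad hε hL0 hD hnD ht0 ht1 hω]
  · linarith [countLE_sub_lt_of_notMem_blockBad hε hL0 hD hnD ht0 ht1 hω]

end Interpolation

section BlockEstimate

variable {ε L : ℝ}

lemma cube_mul_exp_le {r : ℝ} (hr : 1 ≤ r) (hL : 0 < L) (hεL : 1 ≤ ε * L) :
    r ^ 3 * exp (-(2 * L * r ^ (2 * ε))) ≤ exp (-(2 * L)) := by
  have hr0 : 0 < r := one_pos.trans_le hr
  have hlog : 0 ≤ log r := log_nonneg hr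
  have hpow : 1 + 2 * ε * log r ≤ r ^ (2 * ε) := by
    rw [rpow_def_of_pos hr0]; linarith [add_one_le_exp (log r * (2 * ε))]
  rw [← exp_log (pow_pos hr0 3), ← exp_add, log_pow]
  gcongr
  push_cast
  nlinarith [mul_le_mul_of_nonneg_left hpow (by linarith : 0 ≤ 2 * L)]

lemma gridRow_card_le (hε : 0 < ε) (hL : 1 ≤ L) {D : ℕ} (hD : 0 < D) (j : ℕ) :
    ((D / gridStep ε L D j + 2 : ℕ) : ℝ) ≤ 12 * level L j := by
  have hL0 : 0 < L := by linarith
  have hD' : (0 : ℝ) < D := by exact_mod_cast hD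
  have hw := le_width hε hL0 (j : ℝ)
  have hlev := one_le_level L (j : ℝ)
  have hj : (j : ℝ) ≤ L * level L j := le_mul_level hL0 _
  have hw0 : 0 < width ε L j := hL0.trans_le hw
  set x := D * width ε L j / (5 * (j + 1))
  have hx : 0 < x := by positivity
  have hstep : x < gridStep ε L D j := by
    rw [gridStep]; push_cast; exact Nat.lt_floor_add_one x
  have hdiv : ((D / gridStep ε L D j : ℕ) : ℝ) ≤ 5 * (j + 1) / width ε L j :=
    calc ((D / gridStep ε L D j : ℕ) : ℝ) ≤ D / (gridStep ε L D j : ℝ) := Nat.cast_div_le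
      _ ≤ D / x := by gcongr
      _ = 5 * (j + 1) / width ε L j := by simp only [x]; field_simp
  have hdiv' : 5 * ((j : ℝ) + 1) / width ε L j ≤ 10 * level L j := by
    rw [div_le_iff₀ (by linarith)]; nlinarith
  push_cast
  linarith

lemma gridRow_card_mul_exp_le (hε : 0 < ε) (hL : 1 ≤ L) (hεL : 1 ≤ ε * L) {D : ℕ} (hD : 0 < D)
    (j : ℕ) :
    ((D / gridStep ε L D j + 2 : ℕ) : ℝ) * (2 * exp (-(2 * L * level L j ^ (2 * ε)))) ≤
      24 * exp (-(2 * L)) / level L j ^ 2 := by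
  have hlev := level_pos L (j : ℝ)
  have hcube := cube_mul_exp_le (one_le_level L (j : ℝ)) (by linarith) hεL
  rw [le_div_iff₀ (by positivity)]
  calc ((D / gridStep ε L D j + 2 : ℕ) : ℝ) * (2 * exp (-(2 * L * level L j ^ (2 * ε)))) *
        level L j ^ 2
      ≤ 12 * level L j * (2 * exp (-(2 * L * level L j ^ (2 * ε)))) * level L j ^ 2 := by
        gcongr; exact gridRow_card_le hε hL hD j
    _ = 24 * (level L j ^ 3 * exp (-(2 * L * level L j ^ (2 * ε)))) := by ring
    _ ≤ 24 * exp (-(2 * L)) := by gcongr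

lemma sum_range_one_div_level_sq_le (hL : 2 ≤ L) (N : ℕ) :
    ∑ j ∈ Finset.range N, 1 / level L j ^ 2 ≤ 8 * L := by
  have hL0 : 0 < L := by linarith
  set f : ℕ → ℝ := fun j => 1 / (j + L - 1)
  have hterm (j : ℕ) : 1 / level L j ^ 2 ≤ 4 * L ^ 2 * (f j - f (j + 1)) := by
    have hj : (0 : ℝ) ≤ j := Nat.cast_nonneg j
    have hlev : (j + L) / (2 * L) ≤ level L j := by
      have h1 : (j : ℝ) / L ≤ level L j := le_max_left _ _
      have h2 := one_le_level L (j : ℝ)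
      rw [div_le_iff₀ hL0] at h1
      rw [div_le_iff₀ (by positivity)]; nlinarith
    calc 1 / level L j ^ 2 ≤ 1 / ((j + L) / (2 * L)) ^ 2 := by
          gcongr
      _ = 4 * L ^ 2 * (1 / (j + L) ^ 2) := by field_simp; ring
      _ ≤ 4 * L ^ 2 * (f j - f (j + 1)) := by
          gcongr
          simp only [f]; push_cast
          rw [div_sub_div _ _ (by linarith) (by linarith), div_le_div_iff₀ (by positivity)
            (by nlinarith)]
          nlinarith
  calc ∑ j ∈ Finset.range N, 1 / level L j ^ 2
      ≤ ∑ j ∈ Finset.range N, 4 * L ^ 2 * (f j - f (j + 1)) := Finset.sum_le_sum fun j _ => hterm j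
    _ = 4 * L ^ 2 * (f 0 - f N) := by rw [← Finset.mul_sum, Finset.sum_range_sub']
    _ ≤ 4 * L ^ 2 * f 0 := by
        gcongr
        simp only [f, sub_le_self_iff]
        exact div_nonneg zero_le_one (by linarith [Nat.cast_nonneg (α := ℝ) N])
    _ ≤ 8 * L := by
        simp only [f, Nat.cast_zero, zero_add]
        rw [mul_one_div, div_le_iff₀ (by linarith)]; nlinarith

end BlockEstimate

section BlockProbability

variable {Ω : Type*} [MeasurableSpace Ω] {μ : Measure Ω} [IsProbabilityMeasure μ]
variable {U : ℕ → Ω → ℝ} {ε L : ℝ}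

lemma measureReal_gridBad_le (hmeas : ∀ k, Measurable (U k)) (hindep : iIndepFun U μ)
    (hcdf : ∀ k, ∀ q ∈ Set.Icc (0 : ℝ) 1, μ.real {ω | U k ω ≤ q} = q) (hε : 0 < ε)
    (hε' : ε ≤ 1 / 2) (hL : 0 < L) {D j : ℕ} (hD : 0 < D) (hj : j ≤ D) (i : ℕ) :
    μ.real (gridBad U ε L D j i) ≤ 2 * exp (-(2 * L * level L j ^ (2 * ε))) := by
  have hD' : (0 : ℝ) < D := by exact_mod_cast hD
  have hr := one_le_level L (j : ℝ)
  have hr0 := level_pos L (j : ℝ)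
  have hq : (j / D : ℝ) ∈ Set.Icc 0 1 :=
    ⟨by positivity, div_le_one_of_le₀ (by exact_mod_cast hj) hD'.le⟩
  have hb : (j / D : ℝ) * gridNode ε L D j i ≤ L * level L j := by
    calc (j / D : ℝ) * gridNode ε L D j i ≤ j / D * D := by
          gcongr
          exact_mod_cast gridNode_le D j i
      _ = j := div_mul_cancel₀ _ hD'.ne'
      _ ≤ L * level L j := le_mul_level hL _
  refine (measureReal_le_abs_countLE_sub_le_exp_min hmeas hindep (fun k => hcdf k _ hq) hq.1 hq.2
    _ (mul_nonneg (by norm_num) (hL.le.trans (le_width hε hL _))) hb (by positivity)).trans ?_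
  gcongr
  have hsq : (17 / 5 * width ε L j) ^ 2 / (4 * (L * level L j)) =
      289 / 100 * L * level L j ^ (2 * ε) := by
    have hw2 : width ε L j ^ 2 = L ^ 2 * (level L j * level L j ^ (2 * ε)) := by
      rw [width, mul_pow, ← rpow_natCast (level L j ^ (1 / 2 + ε)) 2, ← rpow_mul hr0.le,
        show (1 / 2 + ε) * ((2 : ℕ) : ℝ) = 1 + 2 * ε by push_cast; ring, rpow_add hr0, rpow_one]
    rw [mul_pow, hw2]
    field_simp
    ring
  have hlin : L * level L j ^ (2 * ε) ≤ width ε L j :=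
    mul_le_mul_of_nonneg_left (rpow_le_rpow_of_exponent_le hr (by linarith)) hL.le
  refine le_min ?_ ?_
  · rw [hsq]; nlinarith [rpow_pos_of_pos (level_pos L (j : ℝ)) (2 * ε)]
  · nlinarith [rpow_pos_of_pos (level_pos L (j : ℝ)) (2 * ε)]

lemma measureReal_blockBad_le (hmeas : ∀ k, Measurable (U k)) (hindep : iIndepFun U μ)
    (hcdf : ∀ k, ∀ q ∈ Set.Icc (0 : ℝ) 1, μ.real {ω | U k ω ≤ q} = q) (hε : 0 < ε)
    (hε' : ε ≤ 1 / 2) (hL : 2 ≤ L) (hεL : 1 ≤ ε * L) {D : ℕ} (hD : 0 < D) :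
    μ.real (blockBad U ε L D) ≤ 192 * exp (-L) := by
  have hL0 : 0 < L := by linarith
  calc μ.real (blockBad U ε L D)
      ≤ ∑ j ∈ Finset.range (D + 1), ∑ i ∈ Finset.range (D / gridStep ε L D j + 2),
          μ.real (gridBad U ε L D j i) :=
        (measureReal_biUnion_finset_le _ _).trans
          (Finset.sum_le_sum fun j _ => measureReal_biUnion_finset_le _ _)
    _ ≤ ∑ j ∈ Finset.range (D + 1), 24 * exp (-(2 * L)) * (1 / level L j ^ 2) := by
        refine Finset.sum_le_sum fun j hj => ?_
        refine (Finset.sum_le_sum fun i _ => measureReal_gridBad_le hmeas hindep hcdf hε hε' hL0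
          hD (Nat.lt_succ_iff.1 (Finset.mem_range.1 hj)) i).trans ?_
        rw [Finset.sum_const, Finset.card_range, nsmul_eq_mul, mul_one_div]
        exact gridRow_card_mul_exp_le hε (by linarith) hεL hD j
    _ ≤ 24 * exp (-(2 * L)) * (8 * L) := by
        rw [← Finset.mul_sum]; gcongr; exact sum_range_one_div_level_sq_le hL _
    _ = 192 * exp (-L) * (L * exp (-L)) := by
        rw [show -(2 * L) = -L + -L by ring, exp_add]; ring
    _ ≤ 192 * exp (-L) := by
        refine mul_le_of_le_one_right (by positivity) ?_
        rw [exp_neg, mul_inv_le_iff₀ (exp_pos L), one_mul]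
        linarith [add_one_le_exp L]

end BlockProbability

lemma tendsto_atTop_of_summable_one_div {f : ℕ → ℝ} (hpos : ∀ n, 0 < f n)
    (hf : Summable fun n => 1 / f n) : Tendsto f atTop atTop := by
  have h : Tendsto (fun n => 1 / f n) atTop (nhdsWithin 0 (Set.Ioi 0)) :=
    tendsto_nhdsWithin_iff.2 ⟨hf.tendsto_atTop_zero, Eventually.of_forall fun n => by
      simpa using hpos n⟩
  exact (tendsto_inv_nhdsGT_zero.comp h).congr fun n => by simp

lemma measureReal_setOf_le_eq_of_map_eq {Ω : Type*} [MeasurableSpace Ω] {μ : Measure Ω} {X : Ω → ℝ}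
    (hX : Measurable X) (h : μ.map X = volume.restrict (Set.Icc 0 1)) {q : ℝ}
    (hq : q ∈ Set.Icc (0 : ℝ) 1) : μ.real {ω | X ω ≤ q} = q := by
  have hIcc : Set.Iic q ∩ Set.Icc 0 1 = Set.Icc 0 q := by
    ext x
    simp only [Set.mem_inter_iff, Set.mem_Iic, Set.mem_Icc]
    exact ⟨fun ⟨h, h0, _⟩ => ⟨h0, h⟩, fun ⟨h0, h⟩ => ⟨h, h0, h.trans hq.2⟩⟩
  have : μ {ω | X ω ≤ q} = volume (Set.Icc 0 q) := by
    rw [show {ω | X ω ≤ q} = X ⁻¹' Set.Iic q from rfl, ← Measure.map_apply hX measurableSet_Iic, h,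
      Measure.restrict_apply measurableSet_Iic, hIcc]
  rw [Measure.real, this, Real.volume_Icc, sub_zero, ENNReal.toReal_ofReal hq.1]

lemma le_floor_exp_floor_log_add_one {n : ℕ} (hn : 1 ≤ n) :
    n ≤ ⌊exp (⌊log n⌋₊ + 1)⌋₊ ∧ (⌊exp (⌊log n⌋₊ + 1)⌋₊ : ℝ) ≤ 14 / 5 * n := by
  have hn0 : (0 : ℝ) < n := by exact_mod_cast hn
  have hlog : 0 ≤ log n := log_nonneg (by exact_mod_cast hn)
  constructor
  · refine Nat.le_floor ?_
    exact (exp_log hn0).symm.le.trans (exp_le_exp.2 (Nat.lt_floor_add_one _).le)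
  · calc (⌊exp (⌊log n⌋₊ + 1)⌋₊ : ℝ) ≤ exp (⌊log n⌋₊ + 1) := Nat.floor_le (exp_pos _).le
      _ = exp ⌊log n⌋₊ * exp 1 := exp_add _ _
      _ ≤ n * (14 / 5) := by
          gcongr
          · exact (exp_le_exp.2 (Nat.floor_le hlog)).trans (exp_log hn0).le
          · exact exp_one_lt_d9.le.trans (by norm_num)
      _ = 14 / 5 * n := mul_comm _ _

lemma tsum_measure_blockBad_ne_top {Ω : Type*} [MeasurableSpace Ω] {μ : Measure Ω}
    [IsProbabilityMeasure μ] {U : ℕ → Ω → ℝ} (hmeas : ∀ k, Measurable (U k))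
    (hindep : iIndepFun U μ) (hcdf : ∀ k, ∀ q ∈ Set.Icc (0 : ℝ) 1, μ.real {ω | U k ω ≤ q} = q)
    {ε : ℝ} (hε : 0 < ε) (hε' : ε ≤ 1 / 2) {ψ : ℕ → ℝ} (hψpos : ∀ m, 0 < ψ m)
    (hψ : Summable fun m => 1 / ψ m) {L : ℕ → ℝ} (hL : ∀ m, 2 ≤ L m) (hεL : ∀ m, 1 ≤ ε * L m)
    (hψL : ∀ m, log (ψ m) ≤ L m) {D : ℕ → ℕ} (hD : ∀ m, 0 < D m) :
    ∑' m, μ (blockBad U ε (L m) (D m)) ≠ ⊤ := by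
  refine ne_top_of_le_ne_top (hψ.mul_left 192).tsum_ofReal_ne_top
    (ENNReal.tsum_le_tsum fun m => ?_)
  rw [← ofReal_measureReal]
  refine ENNReal.ofReal_le_ofReal ((measureReal_blockBad_le hmeas hindep hcdf hε hε' (hL m)
    (hεL m) (hD m)).trans ?_)
  rw [mul_one_div, ← exp_log (hψpos m), div_eq_mul_inv, ← exp_neg]
  exact mul_le_mul_of_nonneg_left (exp_le_exp.2 (neg_le_neg (hψL m))) (by norm_num)

/-- Almost-sure fluctuation bound for the coupled triangular array
`A_{n,k} = 1_{{U_k ≤ p_n}}` built from an i.i.d. sequence of uniform `[0,1]` random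
variables (coordinate projections of the infinite product space), with deviation
scale `c(k,n) = 8 (max {k, log ψ ⌊log n⌋})^{1/2+ε} (log ψ ⌊log n⌋)^{1/2-ε}`. -/
theorem stmt_14
    {Ω : Type*} [MeasurableSpace Ω] (μ : Measure Ω) [IsProbabilityMeasure μ]
    (U : ℕ → Ω → ℝ) (hmeas : ∀ k, Measurable (U k))
    (hindep : iIndepFun U μ)
    (hunif : ∀ k, μ.map (U k) = volume.restrict (Set.Icc (0 : ℝ) 1))
    (p : ℕ → ℝ) (hp : ∀ n, p n ∈ Set.Icc (0 : ℝ) 1)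
    (ε : ℝ) (hε : 0 < ε) (hε' : ε < 1 / 4)
    (ψ : ℕ → ℝ) (hψpos : ∀ n, 0 < ψ n) (hψ : Summable fun n => 1 / ψ n)
    (c : ℝ → ℕ → ℝ)
    (hc : ∀ (k : ℝ) (n : ℕ), c k n =
      8 * max k (Real.log (ψ ⌊Real.log n⌋₊)) ^ (1 / 2 + ε)
        * Real.log (ψ ⌊Real.log n⌋₊) ^ (1 / 2 - ε)) :
    ∀ᵐ ω ∂μ, ∀ᶠ n : ℕ in atTop,
      |p n * n - ∑ k ∈ Finset.range n, (if U k ω ≤ p n then (1 : ℝ) else 0)|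
        < c (p n * n) n := by
  have hcdf k q (hq : q ∈ Set.Icc (0 : ℝ) 1) :=
    measureReal_setOf_le_eq_of_map_eq (hmeas k) (hunif k) hq
  -- Truncating `log ψ m` from below makes the block estimates valid for every `m`;
  -- for large `m` it changes nothing.
  set L : ℕ → ℝ := fun m => max (log (ψ m)) (max 100 (1 / ε))
  set D : ℕ → ℕ := fun m => ⌊exp (m + 1)⌋₊
  have hL (m : ℕ) : 100 ≤ L m := le_max_of_le_right (le_max_left _ _)
  have hεL (m : ℕ) : 1 ≤ ε * L m := by
    rw [← div_le_iff₀' hε]; exact le_max_of_le_right (le_max_right _ _)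
  have hD (m : ℕ) : 0 < D m := Nat.floor_pos.2 (one_le_exp (by positivity))
  have hsum := tsum_measure_blockBad_ne_top (μ := μ) hmeas hindep hcdf hε (by linarith) hψpos hψ
    (fun m => by linarith [hL m]) hεL (fun m => le_max_left _ _) hD
  obtain ⟨m₀, hm₀⟩ : ∃ m₀, ∀ m ≥ m₀, L m = log (ψ m) := by
    obtain ⟨m₀, hm₀⟩ := eventually_atTop.1 ((tendsto_atTop_of_summable_one_div hψpos
      hψ).eventually_ge_atTop (exp (max 100 (1 / ε))))
    exact ⟨m₀, fun m hm => max_eq_left ((le_log_iff_exp_le (hψpos m)).2 (hm₀ m hm))⟩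
  have hlog : Tendsto (fun n : ℕ => ⌊log n⌋₊) atTop atTop :=
    tendsto_nat_floor_atTop.comp (tendsto_log_atTop.comp tendsto_natCast_atTop_atTop)
  filter_upwards [ae_eventually_notMem hsum] with ω hω
  filter_upwards [hlog.eventually hω, hlog.eventually_ge_atTop m₀, eventually_ge_atTop 1]
    with n hgood hm hn
  obtain ⟨hnD, hDn⟩ := le_floor_exp_floor_log_add_one hn
  rw [hc, ← hm₀ _ hm, mul_assoc, ← width_eq (by linarith [hL ⌊log n⌋₊])]
  exact abs_sub_countLE_lt_of_notMem_blockBad hε hε' (hL _) (hD _) hnD hDn (hp n).1 (hp n).2 hgood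
end
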